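/- arXiv:2411.12939 — 4 statements merged into one kernel-verified Lean document; each statement's English description precedes it below -/
import Mathlib

section
/- Suppose symmetric positive definite matrices X₁, …, X_M and a Metzler matrix Π (off-diagonal entries nonnegative, rows summing to zero) satisfy the Lyapunov-Metzler inequalities A_iᵀ X_i + X_i A_i + ∑_{j≠i} π_{i,j}(X_j − X_i) + Cᵀ C < 0 for all i. If x ≠ 0 and i is such that xᵀ X_i x ≤ xᵀ X_j x for all j, then xᵀ (A_iᵀ X_i + X_i A_i) x < − xᵀ Cᵀ C x. -/
open Matrix Finset

theorem dotProduct_sum_smul_mulVec {R ι m : Type*} [CommSemiring R] [Fintype m]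
    (s : Finset ι) (c : ι → R) (B : ι → Matrix m m R) (x : m → R) :
    x ⬝ᵥ (∑ j ∈ s, c j • B j) *ᵥ x = ∑ j ∈ s, c j * (x ⬝ᵥ B j *ᵥ x) := by
  simp only [sum_mulVec, dotProduct_sum, smul_mulVec, dotProduct_smul, smul_eq_mul]

theorem dotProduct_metzler_coupling_nonneg_of_forall_le {R ι m : Type*}
    [CommRing R] [PartialOrder R] [IsOrderedRing R] [Fintype ι] [DecidableEq ι] [Fintype m]
    (Pi : Matrix ι ι R) (hoff : ∀ i j, i ≠ j → 0 ≤ Pi i j) (X : ι → Matrix m m R)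
    (x : m → R) (i : ι) (hmin : ∀ j, x ⬝ᵥ X i *ᵥ x ≤ x ⬝ᵥ X j *ᵥ x) :
    0 ≤ x ⬝ᵥ (∑ j ∈ univ.erase i, Pi i j • (X j - X i)) *ᵥ x := by
  rw [dotProduct_sum_smul_mulVec]
  refine sum_nonneg fun j hj => mul_nonneg (hoff i j (ne_of_mem_erase hj).symm) ?_
  rw [sub_mulVec, dotProduct_sub, sub_nonneg]
  exact hmin j

theorem stmt5_general {n p M : ℕ} (A : Fin M → Matrix (Fin n) (Fin n) ℝ)
    (C : Matrix (Fin p) (Fin n) ℝ) (X : Fin M → Matrix (Fin n) (Fin n) ℝ)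
    (Pi : Matrix (Fin M) (Fin M) ℝ)
    (hmetz_off : ∀ i j, i ≠ j → 0 ≤ Pi i j)
    (hLM : ∀ i, ∀ v : Fin n → ℝ, v ≠ 0 →
      v ⬝ᵥ ((A i)ᵀ * X i + X i * A i +
        (∑ j ∈ univ.erase i, Pi i j • (X j - X i)) + Cᵀ * C).mulVec v < 0)
    (x : Fin n → ℝ) (hx : x ≠ 0) (i : Fin M)
    (hmin : ∀ j, x ⬝ᵥ (X i).mulVec x ≤ x ⬝ᵥ (X j).mulVec x) :
    x ⬝ᵥ ((A i)ᵀ * X i + X i * A i).mulVec x < -(x ⬝ᵥ (Cᵀ * C).mulVec x) := by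
  have hcoupling := dotProduct_metzler_coupling_nonneg_of_forall_le Pi hmetz_off X x i hmin
  have hineq := hLM i x hx
  simp only [add_mulVec, dotProduct_add] at hineq ⊢
  linarith

/-- Lyapunov-Metzler inequalities imply that at a minimizing index `i` of the Lyapunov
functions, the derivative of the active quadratic form is below `-xᵀ Cᵀ C x`. -/
theorem stmt5 {n p M : ℕ} (A : Fin M → Matrix (Fin n) (Fin n) ℝ)
    (C : Matrix (Fin p) (Fin n) ℝ) (X : Fin M → Matrix (Fin n) (Fin n) ℝ)
    (Pi : Matrix (Fin M) (Fin M) ℝ)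
    (hmetz_off : ∀ i j, i ≠ j → 0 ≤ Pi i j)
    (hmetz_row : ∀ i, ∑ j, Pi i j = 0)
    (hXsymm : ∀ i, (X i).IsSymm)
    (hXpos : ∀ i, ∀ v : Fin n → ℝ, v ≠ 0 → 0 < v ⬝ᵥ (X i).mulVec v)
    (hLM : ∀ i, ∀ v : Fin n → ℝ, v ≠ 0 →
      v ⬝ᵥ ((A i)ᵀ * X i + X i * A i +
        (∑ j ∈ univ.erase i, Pi i j • (X j - X i)) + Cᵀ * C).mulVec v < 0)
    (x : Fin n → ℝ) (hx : x ≠ 0) (i : Fin M)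
    (hmin : ∀ j, x ⬝ᵥ (X i).mulVec x ≤ x ⬝ᵥ (X j).mulVec x) :
    x ⬝ᵥ ((A i)ᵀ * X i + X i * A i).mulVec x < -(x ⬝ᵥ (Cᵀ * C).mulVec x) :=
  stmt5_general A C X Pi hmetz_off hLM x hx i hmin
end

section
/- If V satisfies the hypotheses of the previous statement with δ ≥ 0 and V ≥ 0, then limsup_{t→∞} (1/(t−t₀)) ∫ τ in t₀..t, g(τ) ≤ δ. -/
open Set Filter MeasureTheory Topology

/-- Average cost ultimate bound: under the hypotheses of the comparison lemma, with `V ≥ 0`,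
`limsup_{t→∞} (1/(t-t₀)) ∫ τ in t₀..t, g τ ≤ δ`. -/
theorem stmt7 (V g : ℝ → ℝ) (t₀ δ : ℝ) (t : ℕ → ℝ)
    (ht0 : t 0 = t₀) (hmono : StrictMono t) (htop : Tendsto t atTop atTop)
    (hg0 : ∀ s, 0 ≤ g s)
    (hgint : ∀ s, IntervalIntegrable g volume t₀ s)
    (hδ : 0 ≤ δ)
    (hVpos : ∀ s, 0 ≤ V s)
    (hcont : ∀ k, ContinuousOn V (Ico (t k) (t (k + 1))))
    (hderiv : ∀ k, ∀ s ∈ Ioo (t k) (t (k + 1)), ∃ v', HasDerivAt V v' s ∧ v' ≤ -g s + δ)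
    (hjump : ∀ k, ∃ L : ℝ, Tendsto V (nhdsWithin (t (k + 1)) (Iio (t (k + 1)))) (nhds L) ∧
      V (t (k + 1)) ≤ L) :
    limsup (fun s => (1 / (s - t₀)) * ∫ τ in t₀..s, g τ) atTop ≤ δ := by
  have hInt : ∀ a b : ℝ, IntervalIntegrable g volume a b := fun a b =>
    (hgint a).symm.trans (hgint b)
  -- Partial piece estimate inside each piece
  have key1 : ∀ k, ∀ s ∈ Ico (t k) (t (k + 1)),
      (∫ τ in t k..s, g τ) + V s ≤ V (t k) + δ * (s - t k) := by
    intro k s hs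
    have hab : t k ≤ s := hs.1
    have hsub : Icc (t k) s ⊆ Ico (t k) (t (k + 1)) :=
      Icc_subset_Ico_iff hab |>.2 ⟨le_rfl, hs.2⟩
    have φint : IntegrableOn (fun x => g x - δ) (Icc (t k) s) := by
      have := (hInt (t k) s).sub (intervalIntegrable_const (c := δ))
      rw [intervalIntegrable_iff_integrableOn_Icc_of_le hab] at this
      exact this
    have hmain := intervalIntegral.integral_le_sub_of_hasDeriv_right_of_le
      (g := fun x => -V x) (g' := fun x => -(deriv V x)) (φ := fun x => g x - δ)
      hab (((hcont k).mono hsub).neg)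
      (fun x hx => by
        obtain ⟨v', hv, _⟩ := hderiv k x ⟨hx.1, lt_trans hx.2 hs.2⟩
        show HasDerivWithinAt (fun x => -V x) (-(deriv V x)) (Ioi x) x
        rw [hv.deriv]
        exact hv.neg.hasDerivWithinAt)
      φint
      (fun x hx => by
        obtain ⟨v', hv, hvle⟩ := hderiv k x ⟨hx.1, lt_trans hx.2 hs.2⟩
        show g x - δ ≤ -(deriv V x)
        rw [hv.deriv]
        linarith)
    have hmain' : (∫ x in t k..s, (g x - δ)) ≤ -V s - -V (t k) := hmain
    rw [intervalIntegral.integral_sub (hInt _ _) intervalIntegrable_const,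
      intervalIntegral.integral_const, smul_eq_mul] at hmain'
    have hc : (s - t k) * δ = δ * (s - t k) := mul_comm _ _
    linarith
  -- Full piece estimate including the jump at the right endpoint
  have key2 : ∀ k, (∫ τ in t k..t (k + 1), g τ) + V (t (k + 1)) ≤
      V (t k) + δ * (t (k + 1) - t k) := by
    intro k
    obtain ⟨L, hL, hVL⟩ := hjump k
    set a := t k
    set b := t (k + 1)
    have hab : a < b := hmono (Nat.lt_succ_self k)
    haveI : NeBot (𝓝[Ioo a b] b) := right_nhdsWithin_Ioo_neBot hab
    have hFcont : ContinuousOn (fun s => ∫ τ in a..s, g τ) (Icc a b) := by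
      have := intervalIntegral.continuousOn_primitive_interval
        (f := g) (μ := volume) (a := a) (b := b)
        (by rw [uIcc_of_le hab.le]
            exact (intervalIntegrable_iff_integrableOn_Icc_of_le hab.le).1 (hInt a b))
      rwa [uIcc_of_le hab.le] at this
    have hFt : Tendsto (fun s => ∫ τ in a..s, g τ) (𝓝[Ioo a b] b)
        (𝓝 (∫ τ in a..b, g τ)) :=
      (hFcont b (right_mem_Icc.2 hab.le)).mono_left (nhdsWithin_mono _ Ioo_subset_Icc_self)
    have hVt : Tendsto V (𝓝[Ioo a b] b) (𝓝 L) :=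
      hL.mono_left (nhdsWithin_mono _ Ioo_subset_Iio_self)
    have hlin : Tendsto (fun s : ℝ => δ * (s - a)) (𝓝[Ioo a b] b) (𝓝 (δ * (b - a))) :=
      ((continuous_const.mul (continuous_id.sub continuous_const)).tendsto b).mono_left
        nhdsWithin_le_nhds
    have hcomb : Tendsto (fun s => (∫ τ in a..s, g τ) + V s - δ * (s - a)) (𝓝[Ioo a b] b)
        (𝓝 ((∫ τ in a..b, g τ) + L - δ * (b - a))) := (hFt.add hVt).sub hlin
    have hev : ∀ᶠ s in 𝓝[Ioo a b] b,
        (∫ τ in a..s, g τ) + V s - δ * (s - a) ≤ V a := by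
      filter_upwards [eventually_mem_nhdsWithin] with s hs
      have := key1 k s ⟨hs.1.le, hs.2⟩
      linarith
    have hlim : (∫ τ in a..b, g τ) + L - δ * (b - a) ≤ V a := le_of_tendsto hcomb hev
    linarith
  -- Telescoping along the partition points
  have key3 : ∀ n, (∫ τ in t₀..t n, g τ) + V (t n) ≤ V t₀ + δ * (t n - t₀) := by
    intro n
    induction n with
    | zero => simp [ht0]
    | succ n ih =>
      have hsplit : (∫ τ in t₀..t n, g τ) + (∫ τ in t n..t (n + 1), g τ) =
          ∫ τ in t₀..t (n + 1), g τ :=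
        intervalIntegral.integral_add_adjacent_intervals (hInt _ _) (hInt _ _)
      have h2 := key2 n
      have : δ * (t (n + 1) - t₀) = δ * (t n - t₀) + δ * (t (n + 1) - t n) := by ring
      linarith
  -- General bound for all times
  have key4 : ∀ s, t₀ ≤ s → (∫ τ in t₀..s, g τ) ≤ V t₀ + δ * (s - t₀) := by
    intro s hs
    have hex : ∃ n, s < t n := (htop.eventually (eventually_gt_atTop s)).exists
    set n := Nat.find hex with hn_def
    have hn : s < t n := Nat.find_spec hex
    have hn0 : n ≠ 0 := by
      intro h
      rw [h, ht0] at hn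
      linarith
    obtain ⟨k, hk⟩ := Nat.exists_eq_succ_of_ne_zero hn0
    have hks : t k ≤ s := by
      have := Nat.find_min hex (m := k) (by omega)
      exact not_lt.1 this
    have hsk : s < t (k + 1) := by rw [show k + 1 = n from hk.symm]; exact hn
    have h1 := key1 k s ⟨hks, hsk⟩
    have h3 := key3 k
    have hsplit : (∫ τ in t₀..t k, g τ) + (∫ τ in t k..s, g τ) = ∫ τ in t₀..s, g τ :=
      intervalIntegral.integral_add_adjacent_intervals (hInt _ _) (hInt _ _)
    have hV := hVpos s
    have : δ * (s - t₀) = δ * (t k - t₀) + δ * (s - t k) := by ring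
    linarith
  -- Conclude via limsup comparison
  have hb : Tendsto (fun s : ℝ => V t₀ * (s - t₀)⁻¹ + δ) atTop (𝓝 δ) := by
    have h1 : Tendsto (fun s : ℝ => s - t₀) atTop atTop :=
      tendsto_atTop_add_const_right _ (-t₀) tendsto_id
    have h2 : Tendsto (fun s : ℝ => (s - t₀)⁻¹) atTop (𝓝 0) :=
      tendsto_inv_atTop_zero.comp h1
    have := (h2.const_mul (V t₀)).add_const δ
    simpa using this
  have hle : ∀ᶠ s in atTop, (1 / (s - t₀)) * ∫ τ in t₀..s, g τ ≤ V t₀ * (s - t₀)⁻¹ + δ := by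
    filter_upwards [eventually_gt_atTop t₀] with s hs
    have h1 : (0:ℝ) < s - t₀ := by linarith
    have h2 : (1 / (s - t₀)) * (∫ τ in t₀..s, g τ) ≤ (1 / (s - t₀)) * (V t₀ + δ * (s - t₀)) :=
      mul_le_mul_of_nonneg_left (key4 s hs.le) (by positivity)
    have h3 : (1 / (s - t₀)) * (V t₀ + δ * (s - t₀)) = V t₀ * (s - t₀)⁻¹ + δ := by
      field_simp
    linarith
  have h0 : ∀ᶠ s in atTop, (0:ℝ) ≤ (1 / (s - t₀)) * ∫ τ in t₀..s, g τ := by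
    filter_upwards [eventually_gt_atTop t₀] with s hs
    have h1 : (0:ℝ) < s - t₀ := by linarith
    have h2 : (0:ℝ) ≤ ∫ τ in t₀..s, g τ :=
      intervalIntegral.integral_nonneg hs.le (fun x _ => hg0 x)
    positivity
  calc limsup (fun s => (1 / (s - t₀)) * ∫ τ in t₀..s, g τ) atTop
      ≤ limsup (fun s : ℝ => V t₀ * (s - t₀)⁻¹ + δ) atTop :=
        limsup_le_limsup hle (isCoboundedUnder_le_of_eventually_le atTop h0)
          hb.isBoundedUnder_le
    _ = δ := hb.limsup_eq
end

section
/- For an n×n real matrix A and p×n matrix C, the matrix Y₂(T) = ∫ τ in 0..T, exp(Aᵀ τ) Cᵀ C exp(A τ) dτ is symmetric positive semidefinite for every T ≥ 0, and if the pair (C, A) is observable (i.e., ⋂_{k<n} ker(C A^k) = {0}) and T > 0 then Y₂(T) is positive definite. -/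
/-!
Writing `F τ = C exp(τA)`, the integrand is `(F τ)ᵀ F τ`, so `Y₂(T)` is symmetric and
`vᵀ Y₂(T) v = ∫₀ᵀ |F τ v|² dτ ≥ 0`. If this vanishes for `T > 0`, the continuous function
`τ ↦ C exp(τA) v` vanishes on `(0, T)`; differentiating `k` times and letting `τ → 0` gives
`C Aᵏ v = 0` for every `k`, hence `v = 0` by observability.
-/

open Matrix NormedSpace Set

attribute [local instance] Matrix.normedAddCommGroup Matrix.normedSpace

open Filter Topology MeasureTheory

section IntervalIntegral

variable {m n : Type*} [Fintype m] [Fintype n] {μ : Measure ℝ} {a b : ℝ}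

-- Not found by instance search through `Matrix.normedAddCommGroup`.
local instance : ENormedAddMonoid (Matrix m n ℝ) := inferInstanceAs (ENormedAddMonoid (m → n → ℝ))

theorem Matrix.transpose_intervalIntegral {F : ℝ → Matrix m n ℝ}
    (hF : IntervalIntegrable F μ a b) :
    (∫ τ in a..b, F τ ∂μ)ᵀ = ∫ τ in a..b, (F τ)ᵀ ∂μ :=
  ((transposeLinearEquiv m n ℝ ℝ).toLinearMap.toContinuousLinearMap.intervalIntegral_comp_comm
    hF).symm

theorem Matrix.intervalIntegral_mulVec [DecidableEq n] {F : ℝ → Matrix m n ℝ}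
    (hF : IntervalIntegrable F μ a b) (v : n → ℝ) :
    (∫ τ in a..b, F τ ∂μ) *ᵥ v = ∫ τ in a..b, F τ *ᵥ v ∂μ :=
  ((LinearMap.applyₗ v ∘ₗ (toLin' : Matrix m n ℝ ≃ₗ[ℝ] _).toLinearMap
    ).toContinuousLinearMap.intervalIntegral_comp_comm hF).symm

theorem Matrix.dotProduct_intervalIntegral {w : ℝ → n → ℝ}
    (hw : IntervalIntegrable w μ a b) (v : n → ℝ) :
    v ⬝ᵥ (∫ τ in a..b, w τ ∂μ) = ∫ τ in a..b, v ⬝ᵥ w τ ∂μ :=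
  ((dotProductBilin ℝ ℝ v).toContinuousLinearMap.intervalIntegral_comp_comm hw).symm

end IntervalIntegral

section Gramian

variable {m n : Type*} [Fintype m] [Fintype n] {μ : Measure ℝ} [IsLocallyFiniteMeasure μ]
  {F : ℝ → Matrix m n ℝ}

theorem Matrix.isSymm_intervalIntegral_transpose_mul_self (hF : Continuous F) (a b : ℝ) :
    (∫ τ in a..b, (F τ)ᵀ * F τ ∂μ).IsSymm := by
  rw [IsSymm, transpose_intervalIntegral
    ((hF.matrix_transpose.matrix_mul hF).intervalIntegrable a b)]
  simp only [transpose_mul, transpose_transpose]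

theorem Matrix.dotProduct_intervalIntegral_transpose_mul_self_mulVec [DecidableEq n]
    (hF : Continuous F) (a b : ℝ) (v : n → ℝ) :
    v ⬝ᵥ (∫ τ in a..b, (F τ)ᵀ * F τ ∂μ) *ᵥ v = ∫ τ in a..b, F τ *ᵥ v ⬝ᵥ F τ *ᵥ v ∂μ := by
  have hFF : Continuous fun τ => (F τ)ᵀ * F τ := hF.matrix_transpose.matrix_mul hF
  rw [intervalIntegral_mulVec (hFF.intervalIntegrable a b),
    dotProduct_intervalIntegral ((hFF.matrix_mulVec continuous_const).intervalIntegrable a b)]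
  simp only [← mulVec_mulVec, dotProduct_mulVec, vecMul_transpose]

end Gramian

theorem Continuous.intervalIntegral_pos_of_nonneg_of_exists_pos {g : ℝ → ℝ} (hg : Continuous g)
    (hg0 : ∀ x, 0 ≤ g x) {a b : ℝ} (hpos : ∃ x ∈ Ioo a b, 0 < g x) :
    0 < ∫ t in a..b, g t := by
  obtain ⟨x, hx, hgx⟩ := hpos
  rw [intervalIntegral.integral_pos_iff_support_of_nonneg_ae (ae_of_all _ hg0)
    (hg.intervalIntegrable a b)]
  refine ⟨hx.1.trans hx.2, ?_⟩
  have hopen : IsOpen (Function.support g ∩ Ioo a b) := hg.isOpen_support.inter isOpen_Ioo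
  exact (hopen.measure_pos volume ⟨x, hgx.ne', hx⟩).trans_le
    (measure_mono (inter_subset_inter_right _ Ioo_subset_Ioc_self))

section ExpSmul

variable {𝔸 F : Type*} [NormedRing 𝔸] [NormedAlgebra ℝ 𝔸] [CompleteSpace 𝔸]
  [NormedAddCommGroup F] [NormedSpace ℝ F]

theorem continuous_exp_smul (a : 𝔸) : Continuous fun τ : ℝ => exp (τ • a) :=
  continuous_iff_continuousAt.2 fun τ => (hasDerivAt_exp_smul_const a τ).continuousAt

theorem ContinuousLinearMap.map_pow_eq_zero_of_map_exp_smul_eq_zero {a : 𝔸} {T : ℝ} (hT : 0 < T)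
    (L : 𝔸 →L[ℝ] F) (hL : ∀ τ ∈ Ioo 0 T, L (exp (τ • a)) = 0) (k : ℕ) :
    L (a ^ k) = 0 := by
  induction k generalizing L with
  | zero =>
    have hzero : EqOn (fun τ : ℝ => L (exp (τ • a))) 0 (closure (Ioo 0 T)) :=
      EqOn.closure hL (L.continuous.comp (continuous_exp_smul a)) continuous_const
    simpa using hzero (show (0 : ℝ) ∈ closure (Ioo 0 T) by simp [closure_Ioo hT.ne, hT.le])
  | succ k ih =>
    rw [pow_succ]
    refine ih (L.comp ((ContinuousLinearMap.mul ℝ 𝔸).flip a)) fun τ hτ => ?_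
    have hderiv := L.hasFDerivAt.comp_hasDerivAt τ (hasDerivAt_exp_smul_const (𝕂 := ℝ) a τ)
    have hconst : (fun σ : ℝ => L (exp (σ • a))) =ᶠ[𝓝 τ] fun _ => 0 :=
      eventuallyEq_of_mem (Ioo_mem_nhds hτ.1 hτ.2) hL
    simpa using hderiv.deriv.symm.trans (hconst.deriv_eq.trans (deriv_const τ 0))

end ExpSmul

section MatrixExp

/- Square matrices get a Banach-algebra structure from the ℓ∞ operator norm, whose topology is the
one `exp` is built from; its completeness must name that uniformity explicitly, since the local
sup-norm instance would be found first. -/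

variable {m n : Type*} [Fintype m] [Fintype n] [DecidableEq n]

theorem Matrix.continuous_exp_smul (A : Matrix n n ℝ) : Continuous fun τ : ℝ => exp (τ • A) := by
  let := Matrix.linftyOpNormedRing (n := n) (α := ℝ)
  let := Matrix.linftyOpNormedAlgebra (n := n) (R := ℝ) (α := ℝ)
  have : @CompleteSpace (Matrix n n ℝ) PseudoMetricSpace.toUniformSpace :=
    FiniteDimensional.complete ℝ _
  exact _root_.continuous_exp_smul A

theorem Matrix.mul_pow_mulVec_eq_zero_of_mul_exp_smul_mulVec_eq_zero (A : Matrix n n ℝ)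
    (C : Matrix m n ℝ) (v : n → ℝ) {T : ℝ} (hT : 0 < T)
    (h : ∀ τ ∈ Ioo 0 T, (C * exp (τ • A)) *ᵥ v = 0) (k : ℕ) : (C * A ^ k) *ᵥ v = 0 := by
  let := Matrix.linftyOpNormedRing (n := n) (α := ℝ)
  let := Matrix.linftyOpNormedAlgebra (n := n) (R := ℝ) (α := ℝ)
  have : @CompleteSpace (Matrix n n ℝ) PseudoMetricSpace.toUniformSpace :=
    FiniteDimensional.complete ℝ _
  let L : Matrix n n ℝ →L[ℝ] m → ℝ :=
    (toLin' C ∘ₗ LinearMap.applyₗ v ∘ₗ (toLin' : Matrix n n ℝ ≃ₗ[ℝ] _).toLinearMap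
      ).toContinuousLinearMap
  have hL : ∀ M, L M = (C * M) *ᵥ v := fun M => by simp [L, mulVec_mulVec]
  exact (hL _).symm.trans <| L.map_pow_eq_zero_of_map_exp_smul_eq_zero (a := A) hT
    (fun τ hτ => (hL _).trans (h τ hτ)) k

end MatrixExp

theorem Matrix.exp_smul_transpose_mul_mul_exp_smul {m n : Type*} [Fintype m] [Fintype n]
    [DecidableEq n] (A : Matrix n n ℝ) (C : Matrix m n ℝ) (τ : ℝ) :
    exp (τ • Aᵀ) * (Cᵀ * C) * exp (τ • A) = (C * exp (τ • A))ᵀ * (C * exp (τ • A)) := by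
  rw [← transpose_smul, exp_transpose, transpose_mul]
  simp only [Matrix.mul_assoc]

/-- `Y₂(T) = ∫ τ in 0..T, exp(Aᵀ τ) Cᵀ C exp(A τ)` is symmetric positive semidefinite for
`T ≥ 0`, and positive definite for `T > 0` when `(C, A)` is observable. -/
theorem stmt11 {n p : ℕ} (A : Matrix (Fin n) (Fin n) ℝ) (C : Matrix (Fin p) (Fin n) ℝ) :
    (∀ T : ℝ, 0 ≤ T →
      (∫ τ in (0 : ℝ)..T, exp (τ • Aᵀ) * (Cᵀ * C) * exp (τ • A)).IsSymm ∧
      ∀ v : Fin n → ℝ,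
        0 ≤ v ⬝ᵥ (∫ τ in (0 : ℝ)..T, exp (τ • Aᵀ) * (Cᵀ * C) * exp (τ • A)).mulVec v) ∧
    ((∀ v : Fin n → ℝ, (∀ k < n, (C * A ^ k).mulVec v = 0) → v = 0) →
      ∀ T : ℝ, 0 < T → ∀ v : Fin n → ℝ, v ≠ 0 →
        0 < v ⬝ᵥ (∫ τ in (0 : ℝ)..T, exp (τ • Aᵀ) * (Cᵀ * C) * exp (τ • A)).mulVec v) := by
  simp_rw [exp_smul_transpose_mul_mul_exp_smul]
  have hF : Continuous fun τ : ℝ => C * exp (τ • A) :=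
    continuous_const.matrix_mul (Matrix.continuous_exp_smul A)
  have hFv : ∀ v, Continuous fun τ : ℝ => (C * exp (τ • A)) *ᵥ v :=
    fun v => hF.matrix_mulVec continuous_const
  have hsq : ∀ w : Fin p → ℝ, 0 ≤ w ⬝ᵥ w := fun w => by simpa using dotProduct_self_star_nonneg w
  refine ⟨fun T hT => ⟨isSymm_intervalIntegral_transpose_mul_self hF 0 T, fun v => ?_⟩,
    fun hobs T hT v hv => ?_⟩
  · rw [dotProduct_intervalIntegral_transpose_mul_self_mulVec hF]
    exact intervalIntegral.integral_nonneg hT fun τ _ => hsq _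
  rw [dotProduct_intervalIntegral_transpose_mul_self_mulVec hF]
  obtain ⟨k, -, hk⟩ : ∃ k < n, (C * A ^ k) *ᵥ v ≠ 0 := by
    contrapose! hv
    exact hobs v hv
  obtain ⟨τ, hτ, hτv⟩ : ∃ τ ∈ Ioo 0 T, (C * exp (τ • A)) *ᵥ v ≠ 0 := by
    contrapose! hk
    exact mul_pow_mulVec_eq_zero_of_mul_exp_smul_mulVec_eq_zero A C v hT hk k
  exact ((hFv v).dotProduct (hFv v)).intervalIntegral_pos_of_nonneg_of_exists_pos
    (fun τ => hsq _) ⟨τ, hτ, (hsq _).lt_of_ne (Ne.symm (mt dotProduct_self_eq_zero.mp hτv))⟩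
end

section
/- For the traffic matrices A₁ = [[−γ,0,0],[0,0,0],[0,β,0]], A₂ = [[0,0,β],[0,−γ,0],[0,0,0]], A₃ = [[0,0,0],[β,0,0],[0,0,−γ]] with γ = 1 and β = 1.1, every convex combination A_λ = λ₁A₁ + λ₂A₂ + λ₃A₃ (λ_i ≥ 0, ∑λ_i = 1) has trace −γ = −1 and is not Hurwitz, i.e., for each λ in the simplex, A_λ has an eigenvalue with nonnegative real part. -/
open Matrix

/-- For the traffic matrices with `γ = 1`, `β = 1.1`, every convex combination
`A_λ = λ₁A₁ + λ₂A₂ + λ₃A₃` has trace `-1` and is not Hurwitz: it has an eigenvalue with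
nonnegative real part. -/
theorem stmt18 :
    ∀ lam : Fin 3 → ℝ, (∀ i, 0 ≤ lam i) → (∑ i, lam i) = 1 →
      (lam 0 • !![-(1 : ℝ), 0, 0; 0, 0, 0; 0, 1.1, 0] +
          lam 1 • !![(0 : ℝ), 0, 1.1; 0, -1, 0; 0, 0, 0] +
          lam 2 • !![(0 : ℝ), 0, 0; 1.1, 0, 0; 0, 0, -1]).trace = -1 ∧
      ∃ μ ∈ spectrum ℂ ((lam 0 • !![-(1 : ℝ), 0, 0; 0, 0, 0; 0, 1.1, 0] +
          lam 1 • !![(0 : ℝ), 0, 1.1; 0, -1, 0; 0, 0, 0] +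
          lam 2 • !![(0 : ℝ), 0, 0; 1.1, 0, 0; 0, 0, -1]).map (Complex.ofReal : ℝ → ℂ)),
        0 ≤ μ.re := by
  intro lam h0 hsum
  have ha := h0 0
  have hb := h0 1
  have hc := h0 2
  have hsum3 : lam 0 + lam 1 + lam 2 = 1 := by
    simpa [Fin.sum_univ_three] using hsum
  constructor
  · simp [Matrix.trace, Matrix.diag, Fin.sum_univ_three, Matrix.add_apply,
      Matrix.smul_apply, Matrix.of_apply, Matrix.cons_val_zero, Matrix.cons_val_one, Matrix.vecHead, Matrix.vecTail]
    linarith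
  · -- find a real nonnegative root of the characteristic polynomial
    set a := lam 0 with hA
    set b := lam 1 with hB
    set c := lam 2 with hC
    have hexists : ∃ μ : ℝ, 0 ≤ μ ∧
        (μ + a) * (μ + b) * (μ + c) - 1.331 * (a * b * c) = 0 := by
      set f : ℝ → ℝ := fun μ => (μ + a) * (μ + b) * (μ + c) - 1.331 * (a * b * c) with hf
      have hcont : ContinuousOn f (Set.Icc 0 2) := by fun_prop
      have hf0 : f 0 ≤ 0 := by
        have : a * b * c ≤ 1.331 * (a * b * c) := by nlinarith [mul_nonneg (mul_nonneg ha hb) hc]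
        simp only [hf]; nlinarith
      have hf2 : 0 ≤ f 2 := by
        have h1 : a ≤ 1 := by linarith
        have h2 : b ≤ 1 := by linarith
        have h3 : c ≤ 1 := by linarith
        simp only [hf]
        nlinarith [mul_nonneg ha hb, mul_nonneg hb hc, mul_nonneg ha hc,
          mul_nonneg (mul_nonneg ha hb) hc]
      have := intermediate_value_Icc (by norm_num : (0:ℝ) ≤ 2) hcont
      have h0mem : (0:ℝ) ∈ Set.Icc (f 0) (f 2) := ⟨hf0, hf2⟩
      obtain ⟨μ, hμmem, hμroot⟩ := this h0mem
      exact ⟨μ, hμmem.1, hμroot⟩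
    obtain ⟨μ, hμ0, hroot⟩ := hexists
    refine ⟨(μ : ℂ), ?_, by simpa using hμ0⟩
    rw [spectrum.mem_iff]
    intro hU
    rw [Matrix.isUnit_iff_isUnit_det] at hU
    have hdet : (algebraMap ℂ (Matrix (Fin 3) (Fin 3) ℂ) (μ:ℂ) -
        ((a • !![-(1 : ℝ), 0, 0; 0, 0, 0; 0, 1.1, 0] +
          b • !![(0 : ℝ), 0, 1.1; 0, -1, 0; 0, 0, 0] +
          c • !![(0 : ℝ), 0, 0; 1.1, 0, 0; 0, 0, -1]).map (Complex.ofReal : ℝ → ℂ))).det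
        = (((μ + a) * (μ + b) * (μ + c) - 1.331 * (a * b * c) : ℝ) : ℂ) := by
      rw [Matrix.det_fin_three]
      simp [Matrix.algebraMap_eq_diagonal, Matrix.sub_apply, Matrix.map_apply,
        Matrix.add_apply, Matrix.smul_apply, Matrix.diagonal_apply, Matrix.one_apply,
        Pi.algebraMap_apply]
      push_cast
      norm_num
      ring
    rw [hdet, hroot] at hU
    simpa using hU
end
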